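/- Let n ≥ 1, let G be a group, and let w be a G-weighting of the hypercube graph Q_n with commutative 2-faces. Then the weight of a walk depends only on its endpoints: any two walks in Q_n with the same initial vertex and the same final vertex have equal weight. -/

import Mathlib

open SimpleGraph

/-- The hypercube graph `Q_n` on vertices `Fin n → Bool`, two vertices being
adjacent iff they differ in exactly one coordinate (Hamming distance 1). -/
def Qgraph (n : ℕ) : SimpleGraph (Fin n → Bool) where
  Adj x y := hammingDist x y = 1
  symm := by
    constructor
    intro x y (h : hammingDist x y = 1)
    show hammingDist y x = 1
    rwa [hammingDist_comm]
  loopless := by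
    constructor
    intro x (h : hammingDist x x = 1)
    simp [hammingDist_self] at h

/-- A `G`-weighting of `Q_n`: an assignment of elements of `G` to ordered pairs of
adjacent vertices such that reversing a pair inverts the weight. -/
def IsWeighting {n : ℕ} {G : Type*} [Group G]
    (w : (Fin n → Bool) → (Fin n → Bool) → G) : Prop :=
  ∀ x y, (Qgraph n).Adj x y → w y x = (w x y)⁻¹

/-- The weight of a walk: the ordered product of the weights of its steps. -/
def walkWeight {n : ℕ} {G : Type*} [Group G]
    (w : (Fin n → Bool) → (Fin n → Bool) → G) {u v : Fin n → Bool}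
    (p : (Qgraph n).Walk u v) : G :=
  (p.darts.map fun d => w d.toProd.1 d.toProd.2).prod

/-- `w` has commutative 2-faces. -/
def CommutativeTwoFaces {n : ℕ} {G : Type*} [Group G]
    (w : (Fin n → Bool) → (Fin n → Bool) → G) : Prop :=
  ∀ (x : Fin n → Bool) (i j : Fin n), i ≠ j → x i = false → x j = false →
    w x (Function.update x i true) *
      w (Function.update x i true)
        (Function.update (Function.update x i true) j true) =
    w x (Function.update x j true) *
      w (Function.update x j true)
        (Function.update (Function.update x j true) i true)

/-! Fix the all-`false` vertex as base point and assign to the vertex with support `s` the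
weight of the monotone walk reaching it that switches its coordinates on in increasing order.
Commutativity of the 2-faces shows that switching the coordinates of `s` on in any order gives
the same weight, so every edge `x → y` has weight `potential x⁻¹ * potential y`; the weight
of a walk then telescopes to a quantity depending only on its endpoints. -/

namespace Qgraph

section Encoding

variable {ι : Type*} [DecidableEq ι]

def ofFinset (s : Finset ι) : ι → Bool := fun j => decide (j ∈ s)

lemma ofFinset_insert (s : Finset ι) (i : ι) :
    ofFinset (insert i s) = Function.update (ofFinset s) i true := by
  funext j
  by_cases h : j = i <;> simp [ofFinset, Function.update, h]

lemma ofFinset_apply_of_notMem {s : Finset ι} {i : ι} (h : i ∉ s) : ofFinset s i = false := by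
  simp [ofFinset, h]

variable [Fintype ι]

def support (x : ι → Bool) : Finset ι := {j | x j = true}

lemma ofFinset_support (x : ι → Bool) : ofFinset (support x) = x := by
  funext j
  cases h : x j <;> simp [ofFinset, support, h]

lemma support_update_true (x : ι → Bool) (i : ι) :
    support (Function.update x i true) = insert i (support x) := by
  ext j
  by_cases h : j = i <;> simp [support, Function.update, h]

end Encoding

lemma exists_eq_update_of_adj {n : ℕ} {x y : Fin n → Bool} (h : (Qgraph n).Adj x y) :
    ∃ i, y = Function.update x i (!x i) := by
  obtain ⟨i, hi⟩ := Finset.card_eq_one.mp (show hammingDist x y = 1 from h)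
  have hdiff : ∀ j, x j ≠ y j ↔ j = i := fun j => by
    simpa using Finset.ext_iff.mp hi j
  refine ⟨i, funext fun j => ?_⟩
  by_cases hj : j = i
  · subst hj
    have := (hdiff j).mpr rfl
    cases hx : x j <;> cases hy : y j <;> simp_all
  · rw [Function.update_of_ne hj]
    exact (not_not.mp (mt (hdiff j).mp hj)).symm

section Potential

variable {ι : Type*} [LinearOrder ι] {G : Type*} [Group G]

def potential (w : (ι → Bool) → (ι → Bool) → G) (s : Finset ι) : G :=
  if h : s.Nonempty then
    potential w (s.erase (s.max' h)) * w (ofFinset (s.erase (s.max' h))) (ofFinset s)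
  else 1
termination_by s.card
decreasing_by exact Finset.card_erase_lt_of_mem (s.max'_mem h)

lemma potential_insert_of_forall_lt (w : (ι → Bool) → (ι → Bool) → G) {s : Finset ι}
    {a : ι} (h : ∀ x ∈ s, x < a) :
    potential w (insert a s) = potential w s * w (ofFinset s) (ofFinset (insert a s)) := by
  have ha : a ∉ s := fun ha => lt_irrefl a (h a ha)
  have hmax : (insert a s).max' (s.insert_nonempty a) = a :=
    le_antisymm
      (Finset.max'_le _ _ _ <|
        (Finset.forall_mem_insert _ _ _).mpr ⟨le_rfl, fun x hx => (h x hx).le⟩)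
      (Finset.le_max' _ a (Finset.mem_insert_self a s))
  rw [potential, dif_pos (s.insert_nonempty a), hmax, Finset.erase_insert ha]

end Potential

section Hypercube

variable {n : ℕ} {G : Type*} [Group G] {w : (Fin n → Bool) → (Fin n → Bool) → G}

lemma commutativeTwoFaces_ofFinset (hcomm : CommutativeTwoFaces w) {s : Finset (Fin n)}
    {i j : Fin n} (hij : i ≠ j) (hi : i ∉ s) (hj : j ∉ s) :
    w (ofFinset s) (ofFinset (insert i s)) *
        w (ofFinset (insert i s)) (ofFinset (insert j (insert i s))) =
      w (ofFinset s) (ofFinset (insert j s)) *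
        w (ofFinset (insert j s)) (ofFinset (insert i (insert j s))) := by
  simpa only [ofFinset_insert] using
    hcomm (ofFinset s) i j hij (ofFinset_apply_of_notMem hi) (ofFinset_apply_of_notMem hj)

lemma potential_insert (hcomm : CommutativeTwoFaces w) {s : Finset (Fin n)} {i : Fin n}
    (hi : i ∉ s) :
    potential w (insert i s) = potential w s * w (ofFinset s) (ofFinset (insert i s)) := by
  induction s using Finset.induction_on_max generalizing i with
  | empty => exact potential_insert_of_forall_lt w (by simp)
  | insert a s hlt ih =>
    have has : a ∉ s := fun ha => lt_irrefl a (hlt a ha)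
    have hia : i ≠ a := fun h => hi (h ▸ Finset.mem_insert_self a s)
    have his : i ∉ s := fun h => hi (Finset.mem_insert_of_mem h)
    rcases lt_or_gt_of_ne hia with hlt' | hgt
    · -- `a` is still the largest coordinate: peel it off, then swap `i` and `a` across the
      -- 2-face at `ofFinset s`.
      have hlt_a : ∀ x ∈ insert i s, x < a :=
        (Finset.forall_mem_insert _ _ _).mpr ⟨hlt', hlt⟩
      rw [Finset.insert_comm, potential_insert_of_forall_lt w hlt_a, ih his, mul_assoc,
        commutativeTwoFaces_ofFinset hcomm hia his has, potential_insert_of_forall_lt w hlt,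
        mul_assoc, Finset.insert_comm i a s]
    · exact potential_insert_of_forall_lt w
        ((Finset.forall_mem_insert _ _ _).mpr ⟨hgt, fun x hx => (hlt x hx).trans hgt⟩)

lemma weight_update_true (hcomm : CommutativeTwoFaces w) {x : Fin n → Bool} {i : Fin n}
    (hx : x i = false) :
    w x (Function.update x i true) =
      (potential w (support x))⁻¹ * potential w (support (Function.update x i true)) := by
  have hi : i ∉ support x := by simp [support, hx]
  rw [support_update_true, potential_insert hcomm hi, ofFinset_insert, ofFinset_support,
    inv_mul_cancel_left]

lemma weight_eq_of_adj (hw : IsWeighting w) (hcomm : CommutativeTwoFaces w)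
    {x y : Fin n → Bool} (h : (Qgraph n).Adj x y) :
    w x y = (potential w (support x))⁻¹ * potential w (support y) := by
  obtain ⟨i, rfl⟩ := exists_eq_update_of_adj h
  cases hx : x i
  · simpa only [hx, Bool.not_false] using weight_update_true hcomm hx
  · simp only [hx, Bool.not_true] at h ⊢
    set y := Function.update x i false
    have hyx : Function.update y i true = x := by
      rw [Function.update_idem, ← hx, Function.update_eq_self]
    have hy : y i = false := Function.update_self i false x
    rw [hw y x h.symm, ← hyx, weight_update_true hcomm hy, hyx, mul_inv_rev, inv_inv]

lemma walkWeight_cons {x y z : Fin n → Bool} (h : (Qgraph n).Adj x y) (p : (Qgraph n).Walk y z) :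
    walkWeight w (.cons h p) = w x y * walkWeight w p := by
  simp [walkWeight]

lemma walkWeight_eq_potential (hw : IsWeighting w) (hcomm : CommutativeTwoFaces w)
    {u v : Fin n → Bool} (p : (Qgraph n).Walk u v) :
    walkWeight w p = (potential w (support u))⁻¹ * potential w (support v) := by
  induction p with
  | nil => simp [walkWeight]
  | cons h p ih =>
    rw [walkWeight_cons, ih, weight_eq_of_adj hw hcomm h, mul_assoc, mul_inv_cancel_left]

end Hypercube

end Qgraph

theorem walkWeight_eq_of_commutativeTwoFaces_general
    (n : ℕ) {G : Type*} [Group G]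
    (w : (Fin n → Bool) → (Fin n → Bool) → G)
    (hw : IsWeighting w) (hcomm : CommutativeTwoFaces w)
    (u v : Fin n → Bool) (p q : (Qgraph n).Walk u v) :
    walkWeight w p = walkWeight w q := by
  rw [Qgraph.walkWeight_eq_potential hw hcomm p, Qgraph.walkWeight_eq_potential hw hcomm q]

theorem walkWeight_eq_of_commutativeTwoFaces
    (n : ℕ) (hn : 1 ≤ n) {G : Type*} [Group G]
    (w : (Fin n → Bool) → (Fin n → Bool) → G)
    (hw : IsWeighting w) (hcomm : CommutativeTwoFaces w)
    (u v : Fin n → Bool) (p q : (Qgraph n).Walk u v) :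
    walkWeight w p = walkWeight w q :=
  walkWeight_eq_of_commutativeTwoFaces_general n w hw hcomm u v p q
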